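/- Let A, B, B', C ∈ ℂ^{r×r} with AB = BA and B'C = CB', let s be a non-negative integer, and suppose C + nI is invertible for all integers n ≥ 0 and C − kI is invertible for all integers 1 ≤ k ≤ s; let |x| < 1, |y| < 1. Then F₁(A, B, B'; C−sI; x, y) = F₁(A, B, B'; C; x, y) + x·A·B·∑_{k=1}^{s} [F₁(A+I, B+I, B'; C+(2−k)I; x, y)]·(C−kI)⁻¹·(C−(k−1)I)⁻¹ + y·A·∑_{k=1}^{s} [F₁(A+I, B, B'+I; C+(2−k)I; x, y)]·B'·(C−kI)⁻¹·(C−(k−1)I)⁻¹. -/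

import Mathlib

/-- The shifted factorial (Pochhammer) matrix: `(A)_0 = I`, `(A)_{n+1} = (A)_n (A + nI)`. -/
noncomputable def mPoch {r : ℕ} (A : Matrix (Fin r) (Fin r) ℂ) : ℕ → Matrix (Fin r) (Fin r) ℂ
  | 0 => 1
  | n + 1 => mPoch A n * (A + (n : ℂ) • 1)

/-- The first Appell matrix function `F₁(A, B, B'; C; x, y)`. -/
noncomputable def appellF1 {r : ℕ} (A B B' C : Matrix (Fin r) (Fin r) ℂ) (x y : ℂ) :
    Matrix (Fin r) (Fin r) ℂ :=
  ∑' p : ℕ × ℕ,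
    (((p.1.factorial : ℂ) * (p.2.factorial : ℂ))⁻¹ * x ^ p.1 * y ^ p.2) •
      (mPoch A (p.1 + p.2) * mPoch B p.1 * mPoch B' p.2 * (mPoch C (p.1 + p.2))⁻¹)

/-!
The identity `(C - I)_N⁻¹ = (C)_N⁻¹ (I + N (C - I)⁻¹)` with `N = m + n` splits every term of
`F₁(A, B, B'; C - I)` into the corresponding term of `F₁(A, B, B'; C)` plus an `m`-weighted and an
`n`-weighted part. Shifting `m ↦ m + 1` (resp. `n ↦ n + 1`) in these parts and peeling off
`(A)_{N+1} = A (A + I)_N`, `(B)_{m+1} = B (B + I)_m` and `(C)_{N+1}⁻¹ = (C + I)_N⁻¹ C⁻¹` turns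
them into `x A B F₁(A + I, B + I, B'; C + I) (C - I)⁻¹ C⁻¹` and
`y A F₁(A + I, B, B' + I; C + I) B' (C - I)⁻¹ C⁻¹`. This is the case `s = 1`; applying it to
`C - sI` gives the general case by induction on `s`.

All series converge absolutely for `|x|, |y| < 1`: in the `∞`-operator norm the ratios
`(‖B‖ + j) / (j + 1)` and `(‖A‖ + j) ‖(C + jI)⁻¹‖ ≤ (‖A‖ + j) / (j - ‖C‖)` tend to `1`, so for every
`θ > 1` the `(m, n)` term is `O((θ² |x|)^m (θ² |y|)^n)`.
-/

open Filter Finset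

theorem Commute.nonsing_inv_right {n α : Type*} [Fintype n] [DecidableEq n] [CommRing α]
    {X M : Matrix n n α} (h : Commute X M) : Commute X M⁻¹ := by
  by_cases hM : IsUnit M
  · obtain ⟨u, rfl⟩ := hM
    rw [← Matrix.coe_units_inv]
    exact h.units_inv_right
  · rw [Matrix.nonsing_inv_eq_ringInverse, Ring.inverse_non_unit _ hM]
    exact Commute.zero_right X

theorem commute_inv_inv_sub_one {n α : Type*} [Fintype n] [DecidableEq n] [CommRing α]
    (C : Matrix n n α) : Commute C⁻¹ (C - 1)⁻¹ :=
  ((Commute.refl C).sub_right (Commute.one_right C)).nonsing_inv_right.symm.nonsing_inv_right.symm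

section Shift

variable {M : Type*} [AddCommMonoid M] [TopologicalSpace M] {f : ℕ × ℕ → M} {a : M}

theorem hasSum_prod_succ_fst_iff (hf : ∀ n, f (0, n) = 0) :
    HasSum (fun p : ℕ × ℕ => f (p.1 + 1, p.2)) a ↔ HasSum f a :=
  Function.Injective.hasSum_iff (g := fun p : ℕ × ℕ => (p.1 + 1, p.2))
    (fun (p q : ℕ × ℕ) h => by simpa [Prod.ext_iff] using h) <| by
    rintro ⟨_ | m, n⟩ hp
    · exact hf n
    · exact absurd ⟨(m, n), rfl⟩ hp

theorem hasSum_prod_succ_snd_iff (hf : ∀ m, f (m, 0) = 0) :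
    HasSum (fun p : ℕ × ℕ => f (p.1, p.2 + 1)) a ↔ HasSum f a :=
  Function.Injective.hasSum_iff (g := fun p : ℕ × ℕ => (p.1, p.2 + 1))
    (fun (p q : ℕ × ℕ) h => by simpa [Prod.ext_iff] using h) <| by
    rintro ⟨m, _ | n⟩ hp
    · exact hf m
    · exact absurd ⟨(m, n), rfl⟩ hp

end Shift

theorem exists_prod_range_le_mul_pow {q : ℕ → ℝ} {θ : ℝ} (hθ : 0 < θ) (hq0 : ∀ j, 0 ≤ q j)
    (hq : ∀ᶠ j in atTop, q j ≤ θ) : ∃ K, 0 ≤ K ∧ ∀ n, ∏ j ∈ range n, q j ≤ K * θ ^ n := by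
  obtain ⟨N, hN⟩ := eventually_atTop.1 hq
  set K := ∑ n ∈ range (N + 1), (∏ j ∈ range n, q j) / θ ^ n
  have hterm (n : ℕ) : 0 ≤ (∏ j ∈ range n, q j) / θ ^ n :=
    div_nonneg (prod_nonneg fun j _ => hq0 j) (pow_nonneg hθ.le n)
  have hsmall : ∀ n ≤ N, ∏ j ∈ range n, q j ≤ K * θ ^ n := fun n hn => by
    rw [← div_le_iff₀ (pow_pos hθ n)]
    exact single_le_sum (fun i _ => hterm i) (mem_range.2 (Nat.lt_succ_of_le hn))
  refine ⟨K, sum_nonneg fun n _ => hterm n, fun n => (le_total n N).elim (hsmall n) fun h => ?_⟩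
  induction n, h using Nat.le_induction with
  | base => exact hsmall N le_rfl
  | succ n hn ih =>
    rw [prod_range_succ, pow_succ, ← mul_assoc]
    exact mul_le_mul ih (hN n hn) (hq0 n) ((prod_nonneg fun j _ => hq0 j).trans ih)

theorem eventually_add_div_sub_le (a c : ℝ) {θ : ℝ} (hθ : 1 < θ) :
    ∀ᶠ j : ℕ in atTop, (a + j) / (j - c) ≤ θ := by
  have h := tendsto_add_mul_div_add_mul_atTop_nhds a (-c) 1 one_ne_zero
  simp only [one_mul, div_one, neg_add_eq_sub] at h
  exact h.eventually_le_const hθ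

section Pochhammer

variable {r : ℕ}

theorem Commute.mPoch_right {X A : Matrix (Fin r) (Fin r) ℂ} (h : Commute X A) (n : ℕ) :
    Commute X (mPoch A n) := by
  induction n with
  | zero => exact Commute.one_right X
  | succ n ih => exact ih.mul_right (h.add_right ((Commute.one_right X).smul_right _))

theorem mPoch_succ_left (A : Matrix (Fin r) (Fin r) ℂ) (n : ℕ) :
    mPoch A (n + 1) = A * mPoch (A + 1) n := by
  induction n with
  | zero => simp [mPoch]
  | succ n ih =>
    rw [mPoch, ih, mul_assoc, mPoch]
    push_cast
    rw [add_smul, one_smul, add_assoc, add_comm 1]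

theorem isUnit_mPoch {C : Matrix (Fin r) (Fin r) ℂ}
    (hC : ∀ n : ℕ, IsUnit (C + (n : ℂ) • (1 : Matrix (Fin r) (Fin r) ℂ))) (n : ℕ) :
    IsUnit (mPoch C n) := by
  induction n with
  | zero => exact isUnit_one
  | succ n ih => exact ih.mul (hC n)

theorem inv_mPoch_succ (C : Matrix (Fin r) (Fin r) ℂ) (n : ℕ) :
    (mPoch C (n + 1))⁻¹ = (C + (n : ℂ) • 1)⁻¹ * (mPoch C n)⁻¹ :=
  Matrix.mul_inv_rev _ _

theorem inv_mPoch_succ_left (C : Matrix (Fin r) (Fin r) ℂ) (n : ℕ) :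
    (mPoch C (n + 1))⁻¹ = (mPoch (C + 1) n)⁻¹ * C⁻¹ := by
  rw [mPoch_succ_left, Matrix.mul_inv_rev]

/-- Comparing `(C - 1)_{n+1} = (C - 1)_n (C - 1 + n) = (C - 1) (C)_n` gives
`(C - 1)_n⁻¹ = (C)_n⁻¹ (C - 1 + n) (C - 1)⁻¹`. -/
theorem inv_mPoch_sub_one {C : Matrix (Fin r) (Fin r) ℂ}
    (hC : ∀ n : ℕ, IsUnit (C + (n : ℂ) • (1 : Matrix (Fin r) (Fin r) ℂ)))
    (hC1 : IsUnit (C - 1)) (n : ℕ) :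
    (mPoch (C - 1) n)⁻¹ = (mPoch C n)⁻¹ + (n : ℂ) • ((mPoch C n)⁻¹ * (C - 1)⁻¹) := by
  set D := C - 1
  set E := D + (n : ℂ) • 1
  have hQE : mPoch D n * E = D * mPoch C n := by
    rw [← mPoch, mPoch_succ_left, sub_add_cancel]
  have hDQ : Commute D⁻¹ (mPoch D n) := (Commute.refl D).nonsing_inv_right.symm.mPoch_right n
  have hEQ : Commute E (mPoch D n) :=
    ((Commute.refl D).add_left ((Commute.one_left D).smul_left _)).mPoch_right n
  have hDP : Commute D (mPoch C n) :=
    ((Commute.refl C).sub_left (Commute.one_left C)).mPoch_right n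
  have hP := (Matrix.isUnit_iff_isUnit_det _).mp (isUnit_mPoch hC n)
  have hD := (Matrix.isUnit_iff_isUnit_det _).mp hC1
  have hleft_inv : (mPoch C n)⁻¹ * E * D⁻¹ * mPoch D n = 1 :=
    calc (mPoch C n)⁻¹ * E * D⁻¹ * mPoch D n = (mPoch C n)⁻¹ * (mPoch D n * E) * D⁻¹ := by
          rw [mul_assoc _ D⁻¹, hDQ.eq, ← mul_assoc, mul_assoc _ E, hEQ.eq]
      _ = (mPoch C n)⁻¹ * mPoch C n * (D * D⁻¹) := by rw [hQE, hDP.eq]; noncomm_ring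
      _ = 1 := by rw [Matrix.nonsing_inv_mul _ hP, Matrix.mul_nonsing_inv _ hD, one_mul]
  rw [Matrix.inv_eq_left_inv hleft_inv, mul_assoc, add_mul, Matrix.mul_nonsing_inv _ hD,
    smul_mul_assoc, one_mul, mul_add, mul_one, mul_smul_comm]

end Pochhammer

section AppellTerm

variable {r : ℕ} (A B B' C : Matrix (Fin r) (Fin r) ℂ) (x y : ℂ)

noncomputable def appellF1Term (p : ℕ × ℕ) : Matrix (Fin r) (Fin r) ℂ :=
  (((p.1.factorial : ℂ) * (p.2.factorial : ℂ))⁻¹ * x ^ p.1 * y ^ p.2) •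
    (mPoch A (p.1 + p.2) * mPoch B p.1 * mPoch B' p.2 * (mPoch C (p.1 + p.2))⁻¹)

theorem appellF1_eq_tsum : appellF1 A B B' C x y = ∑' p, appellF1Term A B B' C x y p := rfl

theorem succ_mul_appellF1_coeff (m n : ℕ) :
    ((m + 1 : ℕ) : ℂ) * ((((m + 1).factorial : ℂ) * (n.factorial : ℂ))⁻¹ * x ^ (m + 1) * y ^ n) =
      x * (((m.factorial : ℂ) * (n.factorial : ℂ))⁻¹ * x ^ m * y ^ n) := by
  rw [Nat.factorial_succ]
  push_cast
  field_simp
  ring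

variable {A B B' C}

theorem appellF1Term_sub_one (hC : ∀ n : ℕ, IsUnit (C + (n : ℂ) • (1 : Matrix (Fin r) (Fin r) ℂ)))
    (hC1 : IsUnit (C - 1)) (p : ℕ × ℕ) :
    appellF1Term A B B' (C - 1) x y p = appellF1Term A B B' C x y p +
      (p.1 : ℂ) • (appellF1Term A B B' C x y p * (C - 1)⁻¹) +
      (p.2 : ℂ) • (appellF1Term A B B' C x y p * (C - 1)⁻¹) := by
  simp only [appellF1Term, inv_mPoch_sub_one hC hC1, Nat.cast_add, mul_add, add_smul, smul_add,
    mul_smul_comm, smul_mul_assoc, mul_assoc]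
  module

theorem succ_smul_appellF1Term_fst (hAB : Commute A B) (m n : ℕ) :
    ((m + 1 : ℕ) : ℂ) • (appellF1Term A B B' C x y (m + 1, n) * (C - 1)⁻¹) =
      x • (A * B * (appellF1Term (A + 1) (B + 1) B' (C + 1) x y (m, n) * (C - 1)⁻¹ * C⁻¹)) := by
  have hB : Commute (mPoch (A + 1) (m + n)) B :=
    (hAB.symm.add_right (Commute.one_right B)).mPoch_right _ |>.symm
  simp only [appellF1Term, show m + 1 + n = m + n + 1 by omega, mPoch_succ_left A,
    mPoch_succ_left B, inv_mPoch_succ_left, smul_mul_assoc, smul_smul,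
    succ_mul_appellF1_coeff, mul_smul_comm]
  simp only [mul_assoc, hB.left_comm, (commute_inv_inv_sub_one C).eq]

theorem succ_smul_appellF1Term_snd (hB'C : Commute B' C) (m n : ℕ) :
    ((n + 1 : ℕ) : ℂ) • (appellF1Term A B B' C x y (m, n + 1) * (C - 1)⁻¹) =
      y • (A * (appellF1Term (A + 1) B (B' + 1) (C + 1) x y (m, n) * B' * (C - 1)⁻¹ * C⁻¹)) := by
  have hP : Commute B' (mPoch (B' + 1) n) :=
    ((Commute.refl B').add_right (Commute.one_right B')).mPoch_right _
  have hQ : Commute B' (mPoch (C + 1) (m + n))⁻¹ :=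
    (hB'C.add_right (Commute.one_right B')).mPoch_right _ |>.nonsing_inv_right
  have hcoeff : ((n + 1 : ℕ) : ℂ) *
      (((m.factorial : ℂ) * ((n + 1).factorial : ℂ))⁻¹ * x ^ m * y ^ (n + 1)) =
        y * (((m.factorial : ℂ) * (n.factorial : ℂ))⁻¹ * x ^ m * y ^ n) := by
    simpa only [mul_comm, mul_left_comm] using succ_mul_appellF1_coeff y x n m
  simp only [appellF1Term, show m + (n + 1) = m + n + 1 by omega, mPoch_succ_left A,
    mPoch_succ_left B', inv_mPoch_succ_left, smul_mul_assoc, smul_smul, hcoeff, mul_smul_comm]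
  simp only [mul_assoc, hP.left_comm, hQ.left_comm, (commute_inv_inv_sub_one C).eq]

end AppellTerm

section Norm

attribute [local instance] Matrix.linftyOpNormedRing Matrix.linftyOpNormedAlgebra

theorem Matrix.linfty_opNorm_one_le {n α : Type*} [Fintype n] [DecidableEq n] [NormedRing α]
    [NormOneClass α] : ‖(1 : Matrix n n α)‖ ≤ 1 := by
  rw [← Matrix.diagonal_one, Matrix.linfty_opNorm_diagonal]
  exact pi_norm_le_iff_of_nonneg zero_le_one |>.2 fun _ => norm_one.le

variable {r : ℕ}

theorem norm_add_natCast_smul_one_le (A : Matrix (Fin r) (Fin r) ℂ) (j : ℕ) :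
    ‖A + (j : ℂ) • 1‖ ≤ ‖A‖ + j := by
  refine (norm_add_le _ _).trans (add_le_add le_rfl ?_)
  rw [norm_smul, Complex.norm_natCast]
  exact mul_le_of_le_one_right j.cast_nonneg Matrix.linfty_opNorm_one_le

theorem norm_mPoch_le (A : Matrix (Fin r) (Fin r) ℂ) (n : ℕ) :
    ‖mPoch A n‖ ≤ ∏ j ∈ range n, (‖A‖ + j) := by
  induction n with
  | zero => exact Matrix.linfty_opNorm_one_le
  | succ n ih =>
    rw [prod_range_succ]
    exact (norm_mul_le _ _).trans
      (mul_le_mul ih (norm_add_natCast_smul_one_le A n) (norm_nonneg _) (by positivity))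

theorem norm_inv_mPoch_le (C : Matrix (Fin r) (Fin r) ℂ) (n : ℕ) :
    ‖(mPoch C n)⁻¹‖ ≤ ∏ j ∈ range n, ‖(C + (j : ℂ) • 1)⁻¹‖ := by
  induction n with
  | zero => simpa [mPoch] using Matrix.linfty_opNorm_one_le
  | succ n ih =>
    rw [inv_mPoch_succ, prod_range_succ, mul_comm (∏ j ∈ range n, _)]
    exact (norm_mul_le _ _).trans (mul_le_mul_of_nonneg_left ih (norm_nonneg _))

theorem norm_inv_add_natCast_smul_one_le {C : Matrix (Fin r) (Fin r) ℂ} {j : ℕ}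
    (hC : IsUnit (C + (j : ℂ) • 1)) (hj : ‖C‖ < j) :
    ‖(C + (j : ℂ) • 1)⁻¹‖ ≤ (j - ‖C‖)⁻¹ := by
  set V := (C + (j : ℂ) • 1)⁻¹
  have hV : (j : ℂ) • V = 1 - V * C := by
    have h := Matrix.nonsing_inv_mul _ ((Matrix.isUnit_iff_isUnit_det _).mp hC)
    rw [mul_add, mul_smul_comm, mul_one] at h
    rw [← h, add_sub_cancel_left]
  have hle : j * ‖V‖ ≤ 1 + ‖V‖ * ‖C‖ := by
    calc j * ‖V‖ = ‖(j : ℂ) • V‖ := by rw [norm_smul, Complex.norm_natCast]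
      _ ≤ ‖(1 : Matrix (Fin r) (Fin r) ℂ)‖ + ‖V * C‖ := hV ▸ norm_sub_le _ _
      _ ≤ 1 + ‖V‖ * ‖C‖ := add_le_add Matrix.linfty_opNorm_one_le (norm_mul_le _ _)
  rw [← one_div, le_div_iff₀ (sub_pos.2 hj)]
  linarith

theorem norm_appellF1Term_le (A B B' C : Matrix (Fin r) (Fin r) ℂ) (x y : ℂ) (m n : ℕ) :
    ‖appellF1Term A B B' C x y (m, n)‖ ≤ ‖x‖ ^ m * ‖y‖ ^ n *
      ((∏ j ∈ range m, (‖B‖ + j) / (j + 1)) * (∏ j ∈ range n, (‖B'‖ + j) / (j + 1)) *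
        ∏ j ∈ range (m + n), (‖A‖ + j) * ‖(C + (j : ℂ) • 1)⁻¹‖) := by
  have hM : ‖mPoch A (m + n) * mPoch B m * mPoch B' n * (mPoch C (m + n))⁻¹‖ ≤
      (∏ j ∈ range (m + n), (‖A‖ + j)) * (∏ j ∈ range m, (‖B‖ + j)) *
        (∏ j ∈ range n, (‖B'‖ + j)) * ∏ j ∈ range (m + n), ‖(C + (j : ℂ) • 1)⁻¹‖ := by
    refine (norm_mul_le _ _).trans ?_
    gcongr
    · exact norm_mul₃_le.trans (by gcongr <;> apply norm_mPoch_le)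
    · exact norm_inv_mPoch_le _ _
  rw [appellF1Term, norm_smul]
  refine (mul_le_mul_of_nonneg_left hM (norm_nonneg _)).trans_eq ?_
  simp only [norm_mul, norm_inv, norm_pow, Complex.norm_natCast]
  simp only [prod_div_distrib, prod_mul_distrib, ← prod_range_add_one_eq_factorial, Nat.cast_prod,
    Nat.cast_add, Nat.cast_one]
  field_simp

theorem summable_appellF1Term (A B B' C : Matrix (Fin r) (Fin r) ℂ) {x y : ℂ}
    (hC : ∀ n : ℕ, IsUnit (C + (n : ℂ) • (1 : Matrix (Fin r) (Fin r) ℂ)))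
    (hx : ‖x‖ < 1) (hy : ‖y‖ < 1) :
    Summable (appellF1Term A B B' C x y) := by
  set ρ := max ‖x‖ ‖y‖
  obtain ⟨θ, hθ, hθρ⟩ : ∃ θ : ℝ, 1 < θ ∧ θ ^ 2 * ρ < 1 := by
    have hρ0 : 0 ≤ ρ := (norm_nonneg x).trans (le_max_left _ _)
    have hρ1 : 0 < 1 - ρ := sub_pos.2 (max_lt hx hy)
    exact ⟨1 + (1 - ρ) / 3, by linarith,
      by nlinarith [mul_pos hρ1 hρ1, mul_nonneg (mul_nonneg hρ0 hρ1.le) hρ1.le]⟩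
  have hratio (b : ℝ) (hb : 0 ≤ b) :
      ∃ K, 0 ≤ K ∧ ∀ n, ∏ j ∈ range n, (b + j) / (j + 1) ≤ K * θ ^ n :=
    exists_prod_range_le_mul_pow (zero_lt_one.trans hθ) (fun j => by positivity) <| by
      simpa only [sub_neg_eq_add] using eventually_add_div_sub_le b (-1) hθ
  obtain ⟨K₁, hK₁0, hK₁⟩ := hratio ‖B‖ (norm_nonneg _)
  obtain ⟨K₂, hK₂0, hK₂⟩ := hratio ‖B'‖ (norm_nonneg _)
  obtain ⟨K₃, hK₃0, hK₃⟩ := exists_prod_range_le_mul_pow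
    (q := fun j : ℕ => (‖A‖ + j) * ‖(C + (j : ℂ) • 1)⁻¹‖) (zero_lt_one.trans hθ)
    (fun j => by positivity) <| by
    filter_upwards [eventually_add_div_sub_le ‖A‖ ‖C‖ hθ,
      tendsto_natCast_atTop_atTop.eventually_gt_atTop ‖C‖] with j hj hjC
    calc (‖A‖ + j) * ‖(C + (j : ℂ) • 1)⁻¹‖ ≤ (‖A‖ + j) * (j - ‖C‖)⁻¹ := by
          gcongr
          exact norm_inv_add_natCast_smul_one_le (hC j) hjC
      _ = (‖A‖ + j) / (j - ‖C‖) := (div_eq_mul_inv _ _).symm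
      _ ≤ θ := hj
  refine Summable.of_norm_bounded
    (g := fun p => K₁ * K₂ * K₃ * ((θ ^ 2 * ‖x‖) ^ p.1 * (θ ^ 2 * ‖y‖) ^ p.2)) ?_ ?_
  · have hgeom {z : ℂ} (hz : ‖z‖ ≤ ρ) : Summable fun k : ℕ => (θ ^ 2 * ‖z‖) ^ k :=
      summable_geometric_of_lt_one (by positivity)
        ((mul_le_mul_of_nonneg_left hz (by positivity)).trans_lt hθρ)
    exact ((hgeom (le_max_left _ _)).mul_of_nonneg (hgeom (le_max_right _ _))
      (fun _ => by positivity) fun _ => by positivity).mul_left _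
  · rintro ⟨m, n⟩
    refine (norm_appellF1Term_le A B B' C x y m n).trans ?_
    calc _ ≤ ‖x‖ ^ m * ‖y‖ ^ n * ((K₁ * θ ^ m) * (K₂ * θ ^ n) * (K₃ * θ ^ (m + n))) := by
          gcongr
          exacts [hK₁ m, hK₂ n, hK₃ (m + n)]
      _ = K₁ * K₂ * K₃ * ((θ ^ 2 * ‖x‖) ^ m * (θ ^ 2 * ‖y‖) ^ n) := by ring

end Norm

theorem hasSum_appellF1 {r : ℕ} (A B B' C : Matrix (Fin r) (Fin r) ℂ) {x y : ℂ}
    (hC : ∀ n : ℕ, IsUnit (C + (n : ℂ) • (1 : Matrix (Fin r) (Fin r) ℂ)))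
    (hx : ‖x‖ < 1) (hy : ‖y‖ < 1) :
    HasSum (appellF1Term A B B' C x y) (appellF1 A B B' C x y) :=
  (summable_appellF1Term A B B' C hC hx hy).hasSum

theorem appellF1_sub_one {r : ℕ} {A B B' C : Matrix (Fin r) (Fin r) ℂ} {x y : ℂ}
    (hAB : Commute A B) (hB'C : Commute B' C)
    (hC : ∀ n : ℕ, IsUnit (C + (n : ℂ) • (1 : Matrix (Fin r) (Fin r) ℂ)))
    (hC1 : IsUnit (C - 1)) (hx : ‖x‖ < 1) (hy : ‖y‖ < 1) :
    appellF1 A B B' (C - 1) x y = appellF1 A B B' C x y +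
      x • (A * B * (appellF1 (A + 1) (B + 1) B' (C + 1) x y * (C - 1)⁻¹ * C⁻¹)) +
      y • (A * (appellF1 (A + 1) B (B' + 1) (C + 1) x y * B' * (C - 1)⁻¹ * C⁻¹)) := by
  have hC' : ∀ n : ℕ, IsUnit (C + 1 + (n : ℂ) • (1 : Matrix (Fin r) (Fin r) ℂ)) := fun n => by
    simpa [add_smul, add_assoc, add_comm (1 : Matrix (Fin r) (Fin r) ℂ)] using hC (n + 1)
  have hF₁ := hasSum_appellF1 (A + 1) (B + 1) B' (C + 1) hC' hx hy
  have hF₂ := hasSum_appellF1 (A + 1) B (B' + 1) (C + 1) hC' hx hy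
  have hfst : HasSum (fun p => (p.1 : ℂ) • (appellF1Term A B B' C x y p * (C - 1)⁻¹))
      (x • (A * B * (appellF1 (A + 1) (B + 1) B' (C + 1) x y * (C - 1)⁻¹ * C⁻¹))) := by
    rw [← hasSum_prod_succ_fst_iff (by simp)]
    simpa only [succ_smul_appellF1Term_fst x y hAB] using
      (((hF₁.mul_right (C - 1)⁻¹).mul_right C⁻¹).mul_left (A * B)).const_smul x
  have hsnd : HasSum (fun p => (p.2 : ℂ) • (appellF1Term A B B' C x y p * (C - 1)⁻¹))
      (y • (A * (appellF1 (A + 1) B (B' + 1) (C + 1) x y * B' * (C - 1)⁻¹ * C⁻¹))) := by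
    rw [← hasSum_prod_succ_snd_iff (by simp)]
    simpa only [succ_smul_appellF1Term_snd x y hB'C] using
      ((((hF₂.mul_right B').mul_right (C - 1)⁻¹).mul_right C⁻¹).mul_left A).const_smul y
  rw [appellF1_eq_tsum, funext (appellF1Term_sub_one x y hC hC1)]
  exact (((hasSum_appellF1 A B B' C hC hx hy).add hfst).add hsnd).tsum_eq

theorem isUnit_sub_natCast_smul_add {r : ℕ} {C : Matrix (Fin r) (Fin r) ℂ} {s : ℕ}
    (hC : ∀ n : ℕ, IsUnit (C + (n : ℂ) • (1 : Matrix (Fin r) (Fin r) ℂ)))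
    (hCs : ∀ k : ℕ, 1 ≤ k → k ≤ s → IsUnit (C - (k : ℂ) • (1 : Matrix (Fin r) (Fin r) ℂ)))
    (n : ℕ) : IsUnit (C - (s : ℂ) • 1 + (n : ℂ) • 1) := by
  rcases le_or_gt s n with h | h
  · convert hC (n - s) using 1
    rw [Nat.cast_sub h]
    module
  · convert hCs (s - n) (by omega) (by omega) using 1
    rw [Nat.cast_sub h.le]
    module

theorem appellF1_recursion_C {r : ℕ} (A B B' C : Matrix (Fin r) (Fin r) ℂ) (x y : ℂ) (s : ℕ)
    (hAB : A * B = B * A) (hB'C : B' * C = C * B')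
    (hC : ∀ n : ℕ, IsUnit (C + (n : ℂ) • (1 : Matrix (Fin r) (Fin r) ℂ)))
    (hCs : ∀ k : ℕ, 1 ≤ k → k ≤ s → IsUnit (C - (k : ℂ) • (1 : Matrix (Fin r) (Fin r) ℂ)))
    (hx : ‖x‖ < 1) (hy : ‖y‖ < 1) :
    appellF1 A B B' (C - (s : ℂ) • 1) x y =
      appellF1 A B B' C x y +
        x • (A * B * ∑ k ∈ Finset.Icc 1 s,
          appellF1 (A + 1) (B + 1) B' (C + ((2 : ℂ) - (k : ℂ)) • 1) x y *
            (C - (k : ℂ) • 1)⁻¹ * (C - ((k : ℂ) - 1) • 1)⁻¹) +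
        y • (A * ∑ k ∈ Finset.Icc 1 s,
          appellF1 (A + 1) B (B' + 1) (C + ((2 : ℂ) - (k : ℂ)) • 1) x y * B' *
            (C - (k : ℂ) • 1)⁻¹ * (C - ((k : ℂ) - 1) • 1)⁻¹) := by
  induction s with
  | zero => simp
  | succ s ih =>
    have hCs' : ∀ k : ℕ, 1 ≤ k → k ≤ s → IsUnit (C - (k : ℂ) • 1) :=
      fun k hk hks => hCs k hk (hks.trans s.le_succ)
    set D := C - (s : ℂ) • 1
    have hB'D : Commute B' D := Commute.sub_right hB'C ((Commute.one_right B').smul_right _)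
    have hD1 : C - ((s + 1 : ℕ) : ℂ) • 1 = D - 1 := by simp only [D]; push_cast; module
    have hD2 : C + (2 - ((s + 1 : ℕ) : ℂ)) • 1 = D + 1 := by simp only [D]; push_cast; module
    have hD3 : C - (((s + 1 : ℕ) : ℂ) - 1) • 1 = D := by simp only [D]; push_cast; module
    have hstep := appellF1_sub_one hAB hB'D (isUnit_sub_natCast_smul_add hC hCs')
      (hD1 ▸ hCs (s + 1) le_add_self le_rfl) hx hy
    rw [sum_Icc_succ_top le_add_self, sum_Icc_succ_top le_add_self, hD1, hD2, hD3, hstep,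
      ih hCs']
    simp only [mul_add, smul_add]
    abel
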